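/- Let R(M⃗_1, …, M⃗_k) be an R-cross-section of IS_n for a decomposition N_n = M_1 ⊔ … ⊔ M_k, and let R_1, …, R_k be R-cross-sections of IS_m. Let φ_μ be the map from the direct product ∏_{i=1}^k (R_i ≀_p R(M⃗_i)) to IS_m ≀_p IS_n sending a tuple ((f_1,a_1),…,(f_k,a_k)) to the element (f,a) with a|_{M_i} = a_i and f|_{M_i} = f_i for each i. Then the image R = φ_μ(∏_{i=1}^k (R_i ≀_p R(M⃗_i))) is an R-cross-section of IS_m ≀_p IS_n. -/

import Mathlib

open scoped Classical

/-- `IS n` is the full inverse symmetric semigroup: all partial bijections of `Fin n`;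
multiplication is composition of partial maps (maps acting on the right). -/
abbrev IS (n : ℕ) : Type := PEquiv (Fin n) (Fin n)

noncomputable section
namespace ISW

instance {n : ℕ} : Mul (IS n) := ⟨PEquiv.trans⟩
instance {n : ℕ} : One (IS n) := ⟨PEquiv.refl _⟩

/-- The domain of a partial bijection. -/
def pdom {n : ℕ} (f : IS n) : Set (Fin n) := {x | (f x).isSome}

/-- The range of a partial bijection. -/
def pran {n : ℕ} (f : IS n) : Set (Fin n) := {y | (f.symm y).isSome}

/-- Green's R-relation on a semigroup (with identity): `u R v` iff `uS = vS`. -/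
def GreenR {S : Type*} [Mul S] (u v : S) : Prop :=
  {w | ∃ s, w = u * s} = {w | ∃ s, w = v * s}

/-- Green's L-relation on a semigroup (with identity): `u L v` iff `Su = Sv`. -/
def GreenL {S : Type*} [Mul S] (u v : S) : Prop :=
  {w | ∃ s, w = s * u} = {w | ∃ s, w = s * v}

/-- An R-cross-section: a subsemigroup containing exactly one element of every
Green R-class. -/
def IsRCrossSection {S : Type*} [Mul S] (T : Set S) : Prop :=
  (∀ a ∈ T, ∀ b ∈ T, a * b ∈ T) ∧ ∀ x : S, ∃! t, t ∈ T ∧ GreenR x t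

/-- An L-cross-section: a subsemigroup containing exactly one element of every
Green L-class. -/
def IsLCrossSection {S : Type*} [Mul S] (T : Set S) : Prop :=
  (∀ a ∈ T, ∀ b ∈ T, a * b ∈ T) ∧ ∀ x : S, ∃! t, t ∈ T ∧ GreenL x t

/-- `φ` realizes a semigroup isomorphism from `T₁` onto `T₂`. -/
def IsSemiIso {S₁ S₂ : Type*} [Mul S₁] [Mul S₂] (T₁ : Set S₁) (T₂ : Set S₂)
    (φ : S₁ → S₂) : Prop :=
  Set.BijOn φ T₁ T₂ ∧ ∀ a ∈ T₁, ∀ b ∈ T₁, φ (a * b) = φ a * φ b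

/-- The partial wreath product `IS m ≀_p IS n`: pairs `(f, a)` with `a ∈ IS n` and
`f` a partial map from `Fin n` to `IS m` whose domain equals the domain of `a`. -/
structure PW (m n : ℕ) where
  base : IS n
  fib : Fin n → Option (IS m)
  dom_eq : ∀ x, (fib x).isSome ↔ (base x).isSome

/-- Multiplication of the partial wreath product: `(f,a)·(g,b) = (f g^a, ab)`. -/
instance {m n : ℕ} : Mul (PW m n) where
  mul u v :=
    { base := u.base * v.base
      fib := fun x => Option.map₂ (· * ·) (u.fib x) ((u.base x).bind v.fib)
      dom_eq := by
        intro x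
        show _ ↔ (((u.base x).bind v.base)).isSome
        cases h : u.base x with
        | none =>
          have : u.fib x = none := by
            have := (u.dom_eq x)
            simp [h] at this
            simpa using Option.not_isSome_iff_eq_none.mp (by simp [this])
          simp [h, this, Option.map₂]
        | some y =>
          have hf : (u.fib x).isSome := (u.dom_eq x).mpr (by simp [h])
          obtain ⟨s, hs⟩ := Option.isSome_iff_exists.mp hf
          cases h2 : v.base y with
          | none =>
            have : v.fib y = none := by
              have := (v.dom_eq y)
              simp [h2] at this
              simpa using Option.not_isSome_iff_eq_none.mp (by simp [this])
            simp [h, h2, hs, this, Option.map₂]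
          | some z =>
            have hg : (v.fib y).isSome := (v.dom_eq y).mpr (by simp [h2])
            obtain ⟨t, ht⟩ := Option.isSome_iff_exists.mp hg
            simp [h, h2, hs, ht, Option.map₂] }

/-- The identity of the partial wreath product. -/
instance {m n : ℕ} : One (PW m n) where
  one :=
    { base := 1
      fib := fun _ => some 1
      dom_eq := by intro x; simp; rfl }

/-- `chainFun L j x`: with `L` listing the elements of a block in increasing order and
`0 ≤ j < |L|` (`j` is the 0-based version of the paper's index), this is the value at `x` of
the chain `a_{i,j}`: the partial bijection with domain everything except `L[j]`,
sending `L[l] ↦ L[l+1]` for `l < j` and fixing all other points. -/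
def chainFun {n : ℕ} (L : List (Fin n)) (j : ℕ) (x : Fin n) : Option (Fin n) :=
  if x ∈ L then
    if L.idxOf x = j then none
    else if L.idxOf x < j then L[L.idxOf x + 1]?
    else some x
  else some x

/-- The generators `a_{i,j}` attached to an ordered decomposition with blocks `B i`. -/
def RGens {n s : ℕ} (B : Fin s → List (Fin n)) : Set (IS n) :=
  {a : IS n | ∃ i : Fin s, ∃ j : ℕ, j < (B i).length ∧ ∀ x, a x = chainFun (B i) j x}

/-- `R(M⃗₁, …, M⃗ₛ)`: the subsemigroup of `IS n` generated by the chains `a_{i,j}`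
together with the identity map. -/
def RSec {n s : ℕ} (B : Fin s → List (Fin n)) : Set (IS n) :=
  (Subsemigroup.closure (RGens B ∪ {1}) : Subsemigroup (IS n))

/-- A decomposition of `Fin n` into disjoint nonempty blocks, each block equipped with
a linear order, recorded by listing the elements of each block in increasing order. -/
structure OrderedPartition (n s : ℕ) where
  B : Fin s → List (Fin n)
  nonempty : ∀ i, B i ≠ []
  nodup : ∀ i, (B i).Nodup
  disjoint : ∀ i j, i ≠ j → ∀ x, x ∈ B i → x ∉ B j
  cover : ∀ x, ∃ i, x ∈ B i

/-- The chain `a_{i,j}` of the block listed by `L`, viewed inside `IS(M_i)`, i.e. embedded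
into `IS n` as a partial bijection whose domain is contained in the block: it is defined on
`L` minus `L[j]`, sends `L[l] ↦ L[l+1]` for `l < j` and fixes the other points of `L`. -/
def chainFunB {n : ℕ} (L : List (Fin n)) (j : ℕ) (x : Fin n) : Option (Fin n) :=
  if x ∈ L then
    if L.idxOf x = j then none
    else if L.idxOf x < j then L[L.idxOf x + 1]?
    else some x
  else none

/-- The generators of `R(M⃗)` inside `IS(M)` (embedded in `IS n`), `M` listed by `L`. -/
def BlockGens {n : ℕ} (L : List (Fin n)) : Set (IS n) :=
  {a : IS n | ∃ j : ℕ, j < L.length ∧ ∀ x, a x = chainFunB L j x}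

/-- The identity of `IS(M)` (embedded in `IS n`): the identity map of the block listed by `L`. -/
def idOn {n : ℕ} (L : List (Fin n)) : Set (IS n) :=
  {a : IS n | ∀ x, a x = if x ∈ L then some x else none}

/-- The R-cross-section `R(M⃗)` of `IS(M)`, embedded into `IS n`, for the block listed by `L`. -/
def RSecBlock {n : ℕ} (L : List (Fin n)) : Set (IS n) :=
  (Subsemigroup.closure (BlockGens L ∪ idOn L) : Subsemigroup (IS n))

/-- The wreath product `R_i ≀_p R(M⃗_i)` where `R(M⃗_i) ⊆ IS(M_i)`, `M_i` listed by `L`,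
and `R_i = T ⊆ IS m`, realized inside `PW m n` via the natural embedding
`IS m ≀_p IS(M_i) ⊆ IS m ≀_p IS n`. -/
def WBlock (m n : ℕ) (L : List (Fin n)) (T : Set (IS m)) : Set (PW m n) :=
  {u : PW m n | u.base ∈ RSecBlock L ∧ ∀ x f, u.fib x = some f → f ∈ T}

/-- The element `e' = (0̄, 1)` of `IS m ≀_p IS n`: the second component is the identity of
`IS n` and the first component sends every point to the empty map `0` of `IS m`. -/
def ezero (m n : ℕ) : PW m n where
  base := 1
  fib := fun _ => some ⊥
  dom_eq := by intro x; simp; rfl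


/-!
Green's relation `R` is equality of domains in `IS n`, and in `IS m ≀_p IS n` it is equality of
the domains of the bases together with `R`-equivalence of the fibres.

The semigroup `R(M⃗)` generated by the chains consists of partial bijections of `M` that are
strictly increasing for the order of `M` and map onto a final segment of `M`. Such a map is
determined by its domain: the position of the image of `x` is read off from the number of domain
points above `x`. Conversely every subset of `M` is a domain, since multiplying on the right by a
chain deletes one prescribed point from the domain. Hence an element of the glued set is
determined by its `R`-class, and every `(f, a)` is `R`-related to the element glued from the maps
of `R(M⃗ᵢ)` with domains `dom a ∩ Mᵢ` and the representatives in `Rᵢ` of the fibres of `f`.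
-/

section GreenR

variable {S : Type*} [Mul S] {u v w : S}

lemma GreenR.symm (h : GreenR u v) : GreenR v u := Eq.symm h

lemma GreenR.trans (h : GreenR u v) (h' : GreenR v w) : GreenR u w := Eq.trans h h'

lemma GreenR.exists_eq_mul [One S] (mul_one : ∀ a : S, a * 1 = a) (h : GreenR u v) :
    ∃ s, u = v * s := by
  have hu : u ∈ {w | ∃ s, w = u * s} := ⟨1, (mul_one u).symm⟩
  exact (h ▸ hu : u ∈ {w | ∃ s, w = v * s})

lemma greenR_of_eq_mul (mul_assoc : ∀ a b c : S, a * b * c = a * (b * c)) {s s' : S}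
    (hu : u = v * s) (hv : v = u * s') : GreenR u v := by
  ext w
  constructor
  · rintro ⟨r, rfl⟩
    exact ⟨s * r, by rw [hu, mul_assoc]⟩
  · rintro ⟨r, rfl⟩
    exact ⟨s' * r, by rw [hv, mul_assoc]⟩

lemma IsRCrossSection.eq_of_greenR {T : Set S} (hT : IsRCrossSection T) {t t' : S}
    (ht : t ∈ T) (ht' : t' ∈ T) (h : GreenR t t') : t = t' :=
  (hT.2 t).unique ⟨ht, rfl⟩ ⟨ht', h⟩

lemma isRCrossSection_of {T : Set S} (mul_mem : ∀ a ∈ T, ∀ b ∈ T, a * b ∈ T)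
    (exists_greenR : ∀ x, ∃ t ∈ T, GreenR x t)
    (eq_of_greenR : ∀ t ∈ T, ∀ t' ∈ T, GreenR t t' → t = t') : IsRCrossSection T := by
  refine ⟨mul_mem, fun x => ?_⟩
  obtain ⟨t, ht, hxt⟩ := exists_greenR x
  exact ⟨t, ⟨ht, hxt⟩, fun t' ⟨ht', hxt'⟩ => eq_of_greenR t' ht' t ht (hxt'.symm.trans hxt)⟩

end GreenR

namespace IS

variable {n : ℕ}

lemma mul_apply (a b : IS n) (x : Fin n) : (a * b) x = (a x).bind b := rfl

lemma mul_one (a : IS n) : a * 1 = a := PEquiv.trans_refl a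

lemma mul_assoc (a b c : IS n) : a * b * c = a * (b * c) := PEquiv.trans_assoc a b c

lemma pdom_mul_subset (a b : IS n) : pdom (a * b) ⊆ pdom a := by
  intro x hx
  simp only [pdom, Set.mem_ofPred_eq, mul_apply] at *
  cases h : a x <;> simp_all

lemma mul_symm_mul {a b : IS n} (h : pdom a = pdom b) : a * (a.symm * b) = b := by
  ext x : 1
  rw [mul_apply]
  cases hx : a x with
  | none =>
    have hb : x ∉ pdom b := h ▸ by simp [pdom, hx]
    rw [Option.bind_none, eq_comm, ← Option.not_isSome_iff_eq_none]
    exact hb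
  | some y =>
    rw [Option.bind_some, mul_apply, (PEquiv.eq_some_iff a).mpr hx, Option.bind_some]

lemma greenR_iff {a b : IS n} : GreenR a b ↔ pdom a = pdom b := by
  constructor
  · intro h
    obtain ⟨s, hs⟩ := h.exists_eq_mul mul_one
    obtain ⟨s', hs'⟩ := h.symm.exists_eq_mul mul_one
    exact (hs ▸ pdom_mul_subset b s).antisymm (hs' ▸ pdom_mul_subset a s')
  · intro h
    exact greenR_of_eq_mul mul_assoc (mul_symm_mul h.symm).symm (mul_symm_mul h).symm

def ofInjective (f : Fin n → Option (Fin n))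
    (hf : ∀ x x' y, f x = some y → f x' = some y → x = x') : IS n where
  toFun := f
  invFun y := if h : ∃ x, f x = some y then some h.choose else none
  inv x y := by
    constructor
    · intro h
      split_ifs at h with hy
      cases h
      exact hy.choose_spec
    · intro h
      rw [dif_pos ⟨x, h⟩]
      exact congrArg some (hf _ _ _ (Exists.choose_spec (⟨x, h⟩ : ∃ x, f x = some y)) h)

@[simp] lemma ofInjective_apply (f : Fin n → Option (Fin n)) (hf) (x : Fin n) :
    ofInjective f hf x = f x := rfl

end IS

namespace PW

variable {m n : ℕ}

lemma ext {u v : PW m n} (hbase : u.base = v.base) (hfib : u.fib = v.fib) : u = v := by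
  cases u; cases v; cases hbase; cases hfib; rfl

lemma mul_base (u v : PW m n) : (u * v).base = u.base * v.base := rfl

lemma mul_fib (u v : PW m n) (x : Fin n) :
    (u * v).fib x = Option.map₂ (· * ·) (u.fib x) ((u.base x).bind v.fib) := rfl

lemma fib_eq_none_iff (u : PW m n) (x : Fin n) : u.fib x = none ↔ u.base x = none := by
  rw [← Option.not_isSome_iff_eq_none, ← Option.not_isSome_iff_eq_none, u.dom_eq x]

lemma exists_fib_eq_some {u : PW m n} {x y : Fin n} (h : u.base x = some y) :
    ∃ f, u.fib x = some f :=
  Option.isSome_iff_exists.mp ((u.dom_eq x).mpr (by simp [h]))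

lemma mul_one (u : PW m n) : u * 1 = u := by
  refine ext (IS.mul_one _) (funext fun x => ?_)
  rw [mul_fib]
  cases hx : u.base x with
  | none => simp [(fib_eq_none_iff u x).mpr hx]
  | some y =>
    obtain ⟨f, hf⟩ := exists_fib_eq_some hx
    simp only [hf, Option.bind_some]
    exact congrArg some (IS.mul_one f)

lemma mul_assoc (u v w : PW m n) : u * v * w = u * (v * w) := by
  refine ext (IS.mul_assoc _ _ _) (funext fun x => ?_)
  simp only [mul_fib, mul_base, IS.mul_apply]
  cases hx : u.base x with
  | none => simp [(fib_eq_none_iff u x).mpr hx]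
  | some y =>
    obtain ⟨f, hf⟩ := exists_fib_eq_some hx
    cases hy : v.base y with
    | none => simp [hf, hy, (fib_eq_none_iff v y).mpr hy]
    | some z =>
      obtain ⟨g, hg⟩ := exists_fib_eq_some hy
      cases hz : w.fib z <;> simp [hf, hg, hy, hz, IS.mul_assoc]

def ofBase (a : IS n) (t : Fin n → IS m) : PW m n where
  base := a
  fib x := (a x).map fun _ => t x
  dom_eq x := by simp

lemma pdom_subset_of_eq_mul {u v s : PW m n} (h : u = v * s) :
    pdom u.base ⊆ pdom v.base ∧
      ∀ x f g, u.fib x = some f → v.fib x = some g → pdom f ⊆ pdom g := by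
  subst h
  refine ⟨IS.pdom_mul_subset _ _, fun x f g hf hg => ?_⟩
  rw [mul_fib, hg] at hf
  cases hs : (v.base x).bind s.fib with
  | none => simp [hs] at hf
  | some h =>
    simp only [hs, Option.map₂_some_some, Option.some_inj] at hf
    exact hf ▸ IS.pdom_mul_subset g h

lemma exists_eq_mul {u v : PW m n} (hbase : pdom u.base = pdom v.base)
    (hfib : ∀ x f g, u.fib x = some f → v.fib x = some g → pdom f = pdom g) :
    ∃ s, v = u * s := by
  refine ⟨ofBase (u.base.symm * v.base)
    (fun y => (u.base.symm y).elim 1 fun x => ((u.fib x).getD 1).symm * (v.fib x).getD 1),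
    ext (IS.mul_symm_mul hbase).symm (funext fun x => ?_)⟩
  rw [mul_fib]
  cases hux : u.base x with
  | none =>
    have hvx : v.base x = none := by
      have : x ∉ pdom v.base := hbase ▸ by simp [pdom, hux]
      simpa [pdom] using this
    simp [(fib_eq_none_iff u x).mpr hux, (fib_eq_none_iff v x).mpr hvx]
  | some y =>
    obtain ⟨f, hf⟩ := exists_fib_eq_some hux
    obtain ⟨z, hvx⟩ := Option.isSome_iff_exists.mp
      (show x ∈ pdom v.base from hbase ▸ by simp [pdom, hux])
    obtain ⟨g, hg⟩ := exists_fib_eq_some hvx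
    have hsymm : u.base.symm y = some x := (PEquiv.eq_some_iff _).mpr hux
    simp [ofBase, IS.mul_apply, hsymm, hf, hg, hvx, IS.mul_symm_mul (hfib x f g hf hg)]

lemma greenR_iff {u v : PW m n} :
    GreenR u v ↔ pdom u.base = pdom v.base ∧
      ∀ x f g, u.fib x = some f → v.fib x = some g → GreenR f g := by
  simp only [IS.greenR_iff]
  constructor
  · intro h
    obtain ⟨s, hs⟩ := h.exists_eq_mul mul_one
    obtain ⟨s', hs'⟩ := h.symm.exists_eq_mul mul_one
    have huv := pdom_subset_of_eq_mul hs
    have hvu := pdom_subset_of_eq_mul hs'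
    exact ⟨huv.1.antisymm hvu.1, fun x f g hf hg => (huv.2 x f g hf hg).antisymm
      (hvu.2 x g f hg hf)⟩
  · rintro ⟨hbase, hfib⟩
    obtain ⟨s, hs⟩ := exists_eq_mul hbase.symm fun x f g hf hg => (hfib x g f hg hf).symm
    obtain ⟨s', hs'⟩ := exists_eq_mul hbase hfib
    exact greenR_of_eq_mul mul_assoc hs hs'

end PW

theorem _root_.List.Nodup.getElem?_eq_some_iff_idxOf {α : Type*} [DecidableEq α] {L : List α}
    (hL : L.Nodup) {i : ℕ} {y : α} : L[i]? = some y ↔ y ∈ L ∧ L.idxOf y = i := by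
  constructor
  · intro h
    obtain ⟨hi, rfl⟩ := List.getElem?_eq_some_iff.mp h
    exact ⟨List.getElem_mem hi, hL.idxOf_getElem i hi⟩
  · rintro ⟨hy, rfl⟩
    exact List.getElem?_idxOf hy

section FinalMono

variable {n : ℕ} {L : List (Fin n)}

def above (L : List (Fin n)) (y : Fin n) : Finset (Fin n) :=
  Finset.univ.filter fun z => z ∈ L ∧ L.idxOf y < L.idxOf z

@[simp] lemma mem_above {y z : Fin n} : z ∈ above L y ↔ z ∈ L ∧ L.idxOf y < L.idxOf z := by
  simp [above]

lemma card_above_lt_card_above {y y' : Fin n} (hy' : y' ∈ L) (h : L.idxOf y < L.idxOf y') :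
    (above L y').card < (above L y).card := by
  refine Finset.card_lt_card ⟨fun z hz => ?_, fun hsub => ?_⟩
  · rw [mem_above] at hz ⊢
    exact ⟨hz.1, h.trans hz.2⟩
  · exact lt_irrefl _ (mem_above.mp (hsub (mem_above.mpr ⟨hy', h⟩))).2

structure IsFinalMono (L : List (Fin n)) (f : Fin n → Option (Fin n)) : Prop where
  mem : ∀ x y, f x = some y → x ∈ L ∧ y ∈ L
  strictMono : ∀ x x' y y', f x = some y → f x' = some y' →
    L.idxOf x < L.idxOf x' → L.idxOf y < L.idxOf y'
  upper : ∀ x y z, f x = some y → z ∈ L → L.idxOf y < L.idxOf z → ∃ x', f x' = some z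

namespace IsFinalMono

variable {f g : Fin n → Option (Fin n)}

lemma eq_none_of_not_mem (hf : IsFinalMono L f) {x : Fin n} (hx : x ∉ L) : f x = none :=
  Option.eq_none_iff_forall_ne_some.mpr fun y h => hx (hf.mem x y h).1

lemma injective (hf : IsFinalMono L f) {x x' y : Fin n} (hx : f x = some y)
    (hx' : f x' = some y) : x = x' := by
  rcases lt_trichotomy (L.idxOf x) (L.idxOf x') with hlt | heq | hgt
  · exact absurd (hf.strictMono _ _ _ _ hx hx' hlt) (lt_irrefl _)
  · exact (List.idxOf_inj (hf.mem _ _ hx).1).mp heq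
  · exact absurd (hf.strictMono _ _ _ _ hx' hx hgt) (lt_irrefl _)

lemma idxOf_lt_of_lt (hf : IsFinalMono L f) {x x' y y' : Fin n} (hx : f x = some y)
    (hx' : f x' = some y') (h : L.idxOf y < L.idxOf y') : L.idxOf x < L.idxOf x' := by
  rcases lt_trichotomy (L.idxOf x) (L.idxOf x') with hlt | heq | hgt
  · exact hlt
  · obtain rfl := (List.idxOf_inj (hf.mem _ _ hx).1).mp heq
    obtain rfl := Option.some_inj.mp (hx.symm.trans hx')
    exact absurd h (lt_irrefl _)
  · exact absurd (hf.strictMono _ _ _ _ hx' hx hgt) h.asymm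

lemma card_above_eq (hf : IsFinalMono L f) {x y : Fin n} (hx : f x = some y) :
    ((above L x).filter fun x' => (f x').isSome).card = (above L y).card := by
  refine Finset.card_bij (fun x' hx' => (f x').get (Finset.mem_filter.mp hx').2)
    (fun x' hx' => ?_) (fun x₁ hx₁ x₂ hx₂ h => ?_) (fun z hz => ?_)
  · obtain ⟨habove, hsome⟩ := Finset.mem_filter.mp hx'
    have hx'y := (Option.some_get hsome).symm
    exact mem_above.mpr ⟨(hf.mem _ _ hx'y).2, hf.strictMono _ _ _ _ hx hx'y (mem_above.mp habove).2⟩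
  · have e₁ := (Option.some_get (Finset.mem_filter.mp hx₁).2).symm
    have e₂ := (Option.some_get (Finset.mem_filter.mp hx₂).2).symm
    rw [h] at e₁
    exact hf.injective e₁ e₂
  · obtain ⟨hzL, hlt⟩ := mem_above.mp hz
    obtain ⟨x', hx'⟩ := hf.upper _ _ _ hx hzL hlt
    exact ⟨x', Finset.mem_filter.mpr ⟨mem_above.mpr ⟨(hf.mem _ _ hx').1,
      hf.idxOf_lt_of_lt hx hx' hlt⟩, by simp [hx']⟩, by simp [hx']⟩

lemma eq_of_isSome_iff (hf : IsFinalMono L f) (hg : IsFinalMono L g)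
    (h : ∀ x, (f x).isSome ↔ (g x).isSome) : f = g := by
  funext x
  cases hfx : f x with
  | none => exact ((Option.not_isSome_iff_eq_none.mp ((h x).not.mp (by simp [hfx])))).symm
  | some y =>
    obtain ⟨y', hgx⟩ := Option.isSome_iff_exists.mp ((h x).mp (by simp [hfx]))
    have hcard := (hf.card_above_eq hfx).symm.trans
      ((congrArg Finset.card (Finset.filter_congr fun x' _ => by rw [h x'])).trans
        (hg.card_above_eq hgx))
    have hidx : L.idxOf y = L.idxOf y' := by
      rcases lt_trichotomy (L.idxOf y) (L.idxOf y') with hlt | heq | hgt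
      · exact absurd hcard (card_above_lt_card_above (hg.mem _ _ hgx).2 hlt).ne'
      · exact heq
      · exact absurd hcard (card_above_lt_card_above (hf.mem _ _ hfx).2 hgt).ne
    rw [hgx, (List.idxOf_inj (hf.mem _ _ hfx).2).mp hidx]

lemma bind (hf : IsFinalMono L f) (hg : IsFinalMono L g) :
    IsFinalMono L fun x => (f x).bind g := by
  refine ⟨fun x z h => ?_, fun x x' z z' h h' hlt => ?_, fun x z w h hw hlt => ?_⟩
  · obtain ⟨y, hy, hz⟩ := Option.bind_eq_some_iff.mp h
    exact ⟨(hf.mem _ _ hy).1, (hg.mem _ _ hz).2⟩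
  · obtain ⟨y, hy, hz⟩ := Option.bind_eq_some_iff.mp h
    obtain ⟨y', hy', hz'⟩ := Option.bind_eq_some_iff.mp h'
    exact hg.strictMono _ _ _ _ hz hz' (hf.strictMono _ _ _ _ hy hy' hlt)
  · obtain ⟨y, hy, hz⟩ := Option.bind_eq_some_iff.mp h
    obtain ⟨y', hy'⟩ := hg.upper _ _ _ hz hw hlt
    obtain ⟨x', hx'⟩ := hf.upper _ _ _ hy (hg.mem _ _ hy').1 (hg.idxOf_lt_of_lt hz hy' hlt)
    exact ⟨x', by simp [hx', hy']⟩

end IsFinalMono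

lemma chainFunB_eq_some_iff (hL : L.Nodup) {j : ℕ} {x y : Fin n} :
    chainFunB L j x = some y ↔ x ∈ L ∧ L.idxOf x ≠ j ∧ y ∈ L ∧
      L.idxOf y = if L.idxOf x < j then L.idxOf x + 1 else L.idxOf x := by
  unfold chainFunB
  by_cases hx : x ∈ L
  · have hxlen := List.idxOf_lt_length_iff.mpr hx
    by_cases hxj : L.idxOf x = j
    · simp [hx, hxj]
    · by_cases hlt : L.idxOf x < j
      · simp [hx, hxj, hlt, hL.getElem?_eq_some_iff_idxOf]
      · simp only [hx, hxj, hlt, if_true, if_false, true_and, ne_eq, not_false_eq_true,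
          Option.some_inj]
        exact ⟨fun h => h ▸ ⟨hx, rfl⟩, fun ⟨hy, h⟩ => ((List.idxOf_inj hx).mp h.symm)⟩
  · simp [hx]

lemma isFinalMono_chainFunB (hL : L.Nodup) (j : ℕ) :
    IsFinalMono L (chainFunB L j) := by
  refine ⟨fun x y h => ?_, fun x x' y y' h h' hlt => ?_, fun x y z h hz hlt => ?_⟩
  · obtain ⟨hx, -, hy, -⟩ := (chainFunB_eq_some_iff hL).mp h
    exact ⟨hx, hy⟩
  · obtain ⟨-, hxj, -, hy⟩ := (chainFunB_eq_some_iff hL).mp h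
    obtain ⟨-, hx'j, -, hy'⟩ := (chainFunB_eq_some_iff hL).mp h'
    rw [hy, hy']
    split_ifs <;> omega
  · obtain ⟨-, -, -, hy⟩ := (chainFunB_eq_some_iff hL).mp h
    have hzlen := List.idxOf_lt_length_iff.mpr hz
    by_cases hzj : j < L.idxOf z
    · exact ⟨z, (chainFunB_eq_some_iff hL).mpr ⟨hz, hzj.ne', hz, by rw [if_neg hzj.not_gt]⟩⟩
    · have hprev : L.idxOf z - 1 < L.length := by omega
      refine ⟨L[L.idxOf z - 1], (chainFunB_eq_some_iff hL).mpr
        ⟨List.getElem_mem hprev, ?_, hz, ?_⟩⟩ <;>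
        rw [hL.idxOf_getElem _ hprev]
      · omega
      · rw [if_pos (by omega)]
        omega

lemma isFinalMono_idOn : IsFinalMono L fun x => if x ∈ L then some x else none := by
  refine ⟨fun x y h => ?_, fun x x' y y' h h' hlt => ?_, fun x y z _ hz _ => ⟨z, by simp [hz]⟩⟩ <;>
    split_ifs at * with hx <;> simp_all

lemma isFinalMono_of_mem_rsecBlock (hL : L.Nodup) {a : IS n} (ha : a ∈ RSecBlock L) :
    IsFinalMono L a := by
  induction ha using Subsemigroup.closure_induction with
  | mem b hb =>
    rcases hb with ⟨j, -, hb⟩ | hb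
    · exact funext hb ▸ isFinalMono_chainFunB hL j
    · exact funext hb ▸ isFinalMono_idOn
  | mul b c _ _ hb hc => exact hb.bind hc

lemma eq_of_pdom_eq_of_mem_rsecBlock (hL : L.Nodup) {a b : IS n} (ha : a ∈ RSecBlock L)
    (hb : b ∈ RSecBlock L) (h : pdom a = pdom b) : a = b :=
  PEquiv.ext <| congrFun <| (isFinalMono_of_mem_rsecBlock hL ha).eq_of_isSome_iff
    (isFinalMono_of_mem_rsecBlock hL hb) fun x => Set.ext_iff.mp h x

lemma chainFunB_isSome_iff {j : ℕ} (hj : j < L.length) {y : Fin n} :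
    (chainFunB L j y).isSome ↔ y ∈ L ∧ L.idxOf y ≠ j := by
  unfold chainFunB
  by_cases hy : y ∈ L
  · by_cases hyj : L.idxOf y = j
    · simp [hy, hyj]
    · by_cases hlt : L.idxOf y < j
      · simp [hy, hyj, hlt, hj.trans_le', Nat.succ_le_of_lt hlt]
      · simp [hy, hyj, hlt]
  · simp [hy]

def chain (hL : L.Nodup) (j : ℕ) : IS n :=
  IS.ofInjective (chainFunB L j) fun _ _ _ => (isFinalMono_chainFunB hL j).injective

lemma chain_mem_rsecBlock (hL : L.Nodup) {j : ℕ} (hj : j < L.length) :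
    chain hL j ∈ RSecBlock L :=
  Subsemigroup.subset_closure (Or.inl ⟨j, hj, fun _ => rfl⟩)

lemma pdom_mul_chain (hL : L.Nodup) {b : IS n} (hb : IsFinalMono L b) {x₀ y₀ : Fin n}
    (hy₀ : b x₀ = some y₀) : pdom (b * chain hL (L.idxOf y₀)) = pdom b \ {x₀} := by
  have hj := List.idxOf_lt_length_iff.mpr (hb.mem _ _ hy₀).2
  ext x
  simp only [pdom, Set.mem_sdiff, Set.mem_singleton_iff, Set.mem_ofPred_eq, IS.mul_apply]
  cases hbx : b x with
  | none => simp
  | some y =>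
    have hyL := (hb.mem _ _ hbx).2
    rw [Option.bind_some, chain, IS.ofInjective_apply, chainFunB_isSome_iff hj,
      Option.isSome_some]
    simp only [hyL, true_and, ne_eq, List.idxOf_inj hyL]
    exact ⟨fun hne hx => hne (Option.some_inj.mp (hbx.symm.trans (hx ▸ hy₀))),
      fun hne hy => hne (hb.injective hbx (hy ▸ hy₀))⟩

lemma exists_mem_rsecBlock_pdom_eq (hL : L.Nodup) (E : Finset (Fin n)) :
    ∃ a ∈ RSecBlock L, pdom a = {x | x ∈ L ∧ x ∉ E} := by
  induction E using Finset.induction_on with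
  | empty =>
    refine ⟨IS.ofInjective _ fun _ _ _ => isFinalMono_idOn.injective,
      Subsemigroup.subset_closure (Or.inr fun x => rfl), ?_⟩
    ext x
    by_cases hx : x ∈ L <;> simp [pdom, hx]
  | insert x₀ E hx₀ ih =>
    obtain ⟨b, hb, hdom⟩ := ih
    by_cases hx₀L : x₀ ∈ L
    · obtain ⟨y₀, hy₀⟩ := Option.isSome_iff_exists.mp
        (show x₀ ∈ pdom b from hdom ▸ ⟨hx₀L, hx₀⟩)
      have hbF := isFinalMono_of_mem_rsecBlock hL hb
      refine ⟨b * chain hL (L.idxOf y₀), Subsemigroup.mul_mem _ hb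
        (chain_mem_rsecBlock hL (List.idxOf_lt_length_iff.mpr (hbF.mem _ _ hy₀).2)), ?_⟩
      rw [pdom_mul_chain hL hbF hy₀, hdom]
      ext x
      simp only [Set.mem_sdiff, Set.mem_ofPred_eq, Set.mem_singleton_iff, Finset.mem_insert]
      tauto
    · refine ⟨b, hb, hdom.trans ?_⟩
      ext x
      simp only [Set.mem_ofPred_eq, Finset.mem_insert, not_or]
      exact ⟨fun ⟨hx, hxE⟩ => ⟨hx, fun h => hx₀L (h ▸ hx), hxE⟩,
        fun ⟨hx, _, hxE⟩ => ⟨hx, hxE⟩⟩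

end FinalMono

def IS.glue {n : ℕ} {ι : Type*} (blk : Fin n → ι) (a : ι → IS n)
    (h : ∀ i x y, a i x = some y → blk y = i) : IS n :=
  IS.ofInjective (fun x => a (blk x) x) fun x x' y hx hx' => by
    have hblk : blk x = blk x' := (h _ _ _ hx).symm.trans (h _ _ _ hx')
    rw [hblk] at hx
    exact (a (blk x')).inj hx hx'

namespace OrderedPartition

variable {n k : ℕ} (P : OrderedPartition n k)

def blockOf (x : Fin n) : Fin k := (P.cover x).choose

lemma mem_blockOf (x : Fin n) : x ∈ P.B (P.blockOf x) := (P.cover x).choose_spec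

lemma blockOf_eq {x : Fin n} {i : Fin k} (hx : x ∈ P.B i) : P.blockOf x = i := by
  by_contra hne
  exact P.disjoint _ _ hne x (P.mem_blockOf x) hx

end OrderedPartition

def PW.EqOn {m n : ℕ} (L : List (Fin n)) (u v : PW m n) : Prop :=
  ∀ x ∈ L, u.base x = v.base x ∧ u.fib x = v.fib x

lemma PW.EqOn.mul {m n : ℕ} {L : List (Fin n)} {u u' v v' : PW m n} (huv : PW.EqOn L u v)
    (huv' : PW.EqOn L u' v') (hv : ∀ x y, v.base x = some y → y ∈ L) :
    PW.EqOn L (u * u') (v * v') := by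
  intro x hx
  obtain ⟨hbase, hfib⟩ := huv x hx
  rw [PW.mul_base, PW.mul_base, IS.mul_apply, IS.mul_apply, PW.mul_fib, PW.mul_fib, hbase, hfib]
  cases hvx : v.base x with
  | none => simp
  | some y =>
    obtain ⟨hbase', hfib'⟩ := huv' y (hv x y hvx)
    simp [hbase', hfib']

lemma mul_mem_wBlock {m n : ℕ} {L : List (Fin n)} {T : Set (IS m)}
    (hT : ∀ a ∈ T, ∀ b ∈ T, a * b ∈ T) {u v : PW m n} (hu : u ∈ WBlock m n L T)
    (hv : v ∈ WBlock m n L T) : u * v ∈ WBlock m n L T := by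
  refine ⟨Subsemigroup.mul_mem _ hu.1 hv.1, fun x f hf => ?_⟩
  rw [PW.mul_fib] at hf
  obtain ⟨g, h, hg, hh, rfl⟩ := Option.map₂_eq_some_iff.mp hf
  obtain ⟨y, -, hy⟩ := Option.bind_eq_some_iff.mp hh
  exact hT _ (hu.2 x g hg) _ (hv.2 y h hy)

def gluedSet {m n k : ℕ} (P : OrderedPartition n k) (T : Fin k → Set (IS m)) : Set (PW m n) :=
  {u | ∃ v : Fin k → PW m n, (∀ i, v i ∈ WBlock m n (P.B i) (T i)) ∧
    ∀ i, PW.EqOn (P.B i) u (v i)}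

section Glued

variable {m n k : ℕ} {P : OrderedPartition n k} {T : Fin k → Set (IS m)}

lemma mul_mem_gluedSet (hT : ∀ i, ∀ a ∈ T i, ∀ b ∈ T i, a * b ∈ T i) {u u' : PW m n}
    (hu : u ∈ gluedSet P T) (hu' : u' ∈ gluedSet P T) : u * u' ∈ gluedSet P T := by
  obtain ⟨v, hv, huv⟩ := hu
  obtain ⟨v', hv', huv'⟩ := hu'
  exact ⟨fun i => v i * v' i, fun i => mul_mem_wBlock (hT i) (hv i) (hv' i),
    fun i => (huv i).mul (huv' i) fun x y h =>
      ((isFinalMono_of_mem_rsecBlock (P.nodup i) (hv i).1).mem x y h).2⟩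

lemma fib_mem_of_mem_gluedSet {u : PW m n} (hu : u ∈ gluedSet P T) {x : Fin n} {f : IS m}
    (hx : u.fib x = some f) : f ∈ T (P.blockOf x) := by
  obtain ⟨v, hv, huv⟩ := hu
  exact (hv _).2 x f ((huv _ x (P.mem_blockOf x)).2 ▸ hx)

lemma base_eq_of_mem_gluedSet {t t' : PW m n} (ht : t ∈ gluedSet P T)
    (ht' : t' ∈ gluedSet P T) (h : pdom t.base = pdom t'.base) : t.base = t'.base := by
  obtain ⟨v, hv, htv⟩ := ht
  obtain ⟨v', hv', htv'⟩ := ht'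
  ext x : 1
  set i := P.blockOf x
  have hvv' : (v i).base = (v' i).base := by
    refine eq_of_pdom_eq_of_mem_rsecBlock (P.nodup i) (hv i).1 (hv' i).1 (Set.ext fun z => ?_)
    by_cases hz : z ∈ P.B i
    · simpa [pdom, (htv i z hz).1, (htv' i z hz).1] using Set.ext_iff.mp h z
    · simp [pdom, (isFinalMono_of_mem_rsecBlock (P.nodup i) (hv i).1).eq_none_of_not_mem hz,
        (isFinalMono_of_mem_rsecBlock (P.nodup i) (hv' i).1).eq_none_of_not_mem hz]
  rw [(htv i x (P.mem_blockOf x)).1, (htv' i x (P.mem_blockOf x)).1, hvv']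

lemma eq_of_greenR_of_mem_gluedSet (hT : ∀ i, IsRCrossSection (T i)) {t t' : PW m n}
    (ht : t ∈ gluedSet P T) (ht' : t' ∈ gluedSet P T) (h : GreenR t t') : t = t' := by
  obtain ⟨hpdom, hfib⟩ := PW.greenR_iff.mp h
  have hbase := base_eq_of_mem_gluedSet ht ht' hpdom
  refine PW.ext hbase (funext fun x => ?_)
  cases htx : t.fib x with
  | none => exact ((t'.fib_eq_none_iff x).mpr (hbase ▸ (t.fib_eq_none_iff x).mp htx)).symm
  | some f =>
    obtain ⟨g, ht'x⟩ := Option.isSome_iff_exists.mp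
      ((t'.dom_eq x).mpr (hbase ▸ (t.dom_eq x).mp (by simp [htx])))
    rw [ht'x, (hT _).eq_of_greenR (fib_mem_of_mem_gluedSet ht htx)
      (fib_mem_of_mem_gluedSet ht' ht'x) (hfib x f g htx ht'x)]

lemma exists_mem_gluedSet_greenR (hT : ∀ i, IsRCrossSection (T i)) (w : PW m n) :
    ∃ u ∈ gluedSet P T, GreenR w u := by
  choose rep hrepT hrep using fun i f => ((hT i).2 f).exists
  choose a ha hdom using fun i =>
    exists_mem_rsecBlock_pdom_eq (P.nodup i) (Finset.univ.filter fun x => w.base x = none)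
  have haF i := isFinalMono_of_mem_rsecBlock (P.nodup i) (ha i)
  have hrange i x y (h : a i x = some y) : P.blockOf y = i := P.blockOf_eq ((haF i).mem x y h).2
  let t x := rep (P.blockOf x) ((w.fib x).getD 1)
  refine ⟨PW.ofBase (IS.glue P.blockOf a hrange) t,
    ⟨fun i => PW.ofBase (a i) t, fun i => ⟨ha i, fun x f hf => ?_⟩, fun i x hx => ?_⟩,
    PW.greenR_iff.mpr ⟨Set.ext fun x => ?_, fun x f g hf hg => ?_⟩⟩
  · obtain ⟨y, hy, rfl⟩ := Option.map_eq_some_iff.mp hf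
    exact P.blockOf_eq ((haF i).mem x y hy).1 ▸ hrepT _ _
  · simp [PW.ofBase, IS.glue, P.blockOf_eq hx]
  · have hx := Set.ext_iff.mp (hdom (P.blockOf x)) x
    simp only [pdom, Set.mem_ofPred_eq, Finset.mem_filter, Finset.mem_univ, true_and] at hx
    show (w.base x).isSome ↔ (a (P.blockOf x) x).isSome
    simpa [P.mem_blockOf, Option.isSome_iff_ne_none] using hx.symm
  · obtain ⟨y, -, rfl⟩ := Option.map_eq_some_iff.mp hg
    simpa [t, hf] using hrep _ f

end Glued

/-- given an R-cross-section `R(M⃗₁,…,M⃗ₖ)` of `IS n` and R-cross-sections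
`R_1,…,R_k` of `IS m`, the image of `∏ᵢ (R_i ≀_p R(M⃗_i))` under `φ_μ` — i.e. the set of
those `(f,a)` obtained by glueing a tuple `((f_i,a_i))_i` blockwise, `a|_{M_i} = a_i`,
`f|_{M_i} = f_i` — is an R-cross-section of `IS m ≀_p IS n`. -/
theorem wreath_rcross_product (m n k : ℕ) (P : OrderedPartition n k)
    (T : Fin k → Set (IS m)) (hT : ∀ i, IsRCrossSection (T i)) :
    IsRCrossSection
      {u : PW m n | ∃ v : Fin k → PW m n,
        (∀ i, v i ∈ WBlock m n (P.B i) (T i)) ∧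
        (∀ i, ∀ x ∈ P.B i, u.base x = (v i).base x ∧ u.fib x = (v i).fib x)} := by
  show IsRCrossSection (gluedSet P T)
  exact isRCrossSection_of (fun _ hu _ hu' => mul_mem_gluedSet (fun i => (hT i).1) hu hu')
    (exists_mem_gluedSet_greenR hT) (fun _ ht _ ht' => eq_of_greenR_of_mem_gluedSet hT ht ht')

end ISW
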